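/- Let p_n ∈ ℤ[z] be defined by p_0 = 0 and p_{n+1} = p_n^2 + z, and for ℓ, n ∈ ℕ set q_{ℓ,n} = p_{ℓ+n} − p_ℓ. For every ℓ ∈ ℕ, every n ≥ 1, every divisor k of n, and every r ∈ hyp(k), the point r is a root of q_{ℓ,n} of multiplicity exactly ⌊(ℓ−1)/k⌋ + 2 (with the conventions that this equals 1 for ℓ = 0 and 2 for ℓ = 1). -/
import Mathlib


open Polynomial

/-- The polynomials `p n` defined by `p 0 = 0`, `p (n+1) = p n ^ 2 + X`. -/
noncomputable def P : ℕ → Polynomial ℤ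
  | 0 => 0
  | n + 1 => P n ^ 2 + X

/-- The Misiurewicz–Thurston polynomials `q l n = p (l + n) - p l`. -/
noncomputable def Q (l n : ℕ) : Polynomial ℤ := P (l + n) - P l

/-- `p n` viewed over `ℂ`. -/
noncomputable def pC (n : ℕ) : Polynomial ℂ := (P n).map (Int.castRingHom ℂ)

/-- `q l n` viewed over `ℂ`. -/
noncomputable def qC (l n : ℕ) : Polynomial ℂ := (Q l n).map (Int.castRingHom ℂ)

/-- Hyperbolic centers of order `n`: roots of `p n` that are not roots of `p k`
for any strict divisor `k` of `n`. -/
def hyp (n : ℕ) : Set ℂ :=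
  {z | (pC n).eval z = 0 ∧ ∀ k : ℕ, k ∣ n → k ≠ n → (pC k).eval z ≠ 0}

/-- Misiurewicz points of type `(l, n)`. -/
def mis (l n : ℕ) : Set ℂ :=
  {z | (qC l n).eval z = 0 ∧ (qC (l - 1) n).eval z ≠ 0 ∧
    ∀ k : ℕ, k ∣ n → k ≠ n → (qC l k).eval z ≠ 0}

/-- Gleason's polynomial `h n = ∏_{r ∈ hyp n} (X - r)`. -/
noncomputable def hPoly (n : ℕ) : Polynomial ℂ := ∏ᶠ r ∈ hyp n, (X - C r)

/-- Reduced Misiurewicz polynomial `m l n = ∏_{r ∈ mis l n} (X - r)`. -/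
noncomputable def mPoly (l n : ℕ) : Polynomial ℂ := ∏ᶠ r ∈ mis l n, (X - C r)

/-- The multiplicity `η l k = ⌊(l - 1)/k⌋ + 2`, with the conventions
`η 0 k = 1` (floor taken in `ℤ`) and `η 1 k = 2`. -/
def eta (l k : ℕ) : ℕ := if l = 0 then 1 else (l - 1) / k + 2

lemma P_zero : P 0 = 0 := rfl
lemma P_succ (n : ℕ) : P (n + 1) = P n ^ 2 + X := rfl

lemma pC_zero : pC 0 = 0 := by simp [pC, P_zero]
lemma pC_succ (n : ℕ) : pC (n + 1) = pC n ^ 2 + X := by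
  simp [pC, P_succ, Polynomial.map_add, Polynomial.map_pow]

lemma evalP_succ (n : ℕ) (r : ℂ) : (pC (n+1)).eval r = (pC n).eval r ^ 2 + r := by
  rw [pC_succ]; simp

lemma derivative_pC_succ (n : ℕ) :
    (pC (n+1)).derivative = C 2 * pC n * (pC n).derivative + 1 := by
  rw [pC_succ]; simp [derivative_pow]

lemma evalD_succ (n : ℕ) (r : ℂ) :
    ((pC (n+1)).derivative).eval r = 2 * (pC n).eval r * ((pC n).derivative).eval r + 1 := by
  rw [derivative_pC_succ]; simp

lemma P_monic_deg : ∀ n : ℕ, (P (n+1)).Monic ∧ (P (n+1)).natDegree = 2 ^ n := by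
  intro n
  induction n with
  | zero => constructor <;> simp [P_succ, P_zero]
  | succ m ih =>
    obtain ⟨hm, hd⟩ := ih
    have hpow : (P (m+1) ^ 2).Monic := hm.pow 2
    have hdeg : (P (m+1) ^ 2).natDegree = 2 ^ (m+1) := by
      rw [hm.natDegree_pow, hd]; ring
    have hlt : (X : Polynomial ℤ).degree < (P (m+1) ^ 2).degree := by
      rw [degree_X, degree_eq_natDegree hpow.ne_zero, hdeg]
      exact_mod_cast Nat.one_lt_two_pow_iff.mpr (by omega)
    refine ⟨?_, ?_⟩
    · rw [P_succ]; exact hpow.add_of_left hlt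
    · rw [P_succ, natDegree_add_eq_left_of_degree_lt hlt, hdeg]

lemma Q_ne_zero (l n : ℕ) (hn : 1 ≤ n) : Q l n ≠ 0 := by
  intro h
  have he : P (l + n) = P l := sub_eq_zero.mp h
  cases l with
  | zero =>
    obtain ⟨n', rfl⟩ := Nat.exists_eq_add_of_le hn
    exact (P_monic_deg n').1.ne_zero
      (by rw [show 0 + (1 + n') = n' + 1 by omega] at he; simpa [P_zero] using he)
  | succ l' =>
    obtain ⟨n', rfl⟩ := Nat.exists_eq_add_of_le hn
    have h1 := (P_monic_deg (l' + n')).2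
    have h2 := (P_monic_deg l').2
    rw [show l' + 1 + (1 + n') = l' + n' + 1 + 1 by omega] at he
    rw [show l' + n' + 1 + 1 = (l' + n' + 1) + 1 from rfl] at he
    have h1' := (P_monic_deg (l' + n' + 1)).2
    rw [he, h2] at h1'
    have := Nat.pow_right_injective (le_refl 2) h1'
    omega

lemma qC_ne_zero (l n : ℕ) (hn : 1 ≤ n) : qC l n ≠ 0 := by
  intro h
  exact Q_ne_zero l n hn (by
    have := Polynomial.map_injective (Int.castRingHom ℂ)
      (fun a b hab => by simpa using hab)
    exact this (by simpa [qC] using h))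

lemma qC_zero_left (n : ℕ) : qC 0 n = pC n := by
  simp [qC, Q, pC, P_zero]

lemma qC_succ_left (l n : ℕ) : qC (l+1) n = qC l n * (pC (l+n) + pC l) := by
  have : Q (l+1) n = Q l n * (P (l+n) + P l) := by
    unfold Q
    rw [show l + 1 + n = (l + n) + 1 from by omega, P_succ, P_succ]
    ring
  simp only [qC, this, Polynomial.map_mul, Polynomial.map_add]
  rfl

section Periodic
variable {r : ℂ} {k : ℕ}

lemma eval_add_period (hak : (pC k).eval r = 0) :
    ∀ j, (pC (j + k)).eval r = (pC j).eval r := by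
  intro j
  induction j with
  | zero => simpa [pC_zero] using hak
  | succ m ih =>
    rw [show m + 1 + k = (m + k) + 1 from by omega, evalP_succ, ih, evalP_succ]

lemma eval_add_mul_period (hak : (pC k).eval r = 0) :
    ∀ m j, (pC (j + m * k)).eval r = (pC j).eval r := by
  intro m
  induction m with
  | zero => simp
  | succ s ih =>
    intro j
    rw [show j + (s+1) * k = (j + s * k) + k from by ring, eval_add_period hak, ih]

lemma eval_mul_period (hak : (pC k).eval r = 0) (m : ℕ) :
    (pC (m * k)).eval r = 0 := by
  have := eval_add_mul_period hak m 0
  simpa [pC_zero] using this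

lemma bezout_nat (j k : ℕ) (hj : 0 < j) (hk : 0 < k) :
    ∃ u v : ℕ, u * j = Nat.gcd j k + v * k := by
  have hg : (Nat.gcd j k : ℤ) = j * Nat.gcdA j k + k * Nat.gcdB j k := Nat.gcd_eq_gcd_ab j k
  set x := Nat.gcdA j k with hx
  set y := Nat.gcdB j k with hy
  set m : ℕ := x.natAbs + y.natAbs with hm
  have h1 : (0:ℤ) ≤ x + m * k := by
    have h1a : -(x.natAbs : ℤ) ≤ x := by omega
    have h1b : (m:ℤ) * 1 ≤ (m:ℤ) * k := by
      apply mul_le_mul_of_nonneg_left _ (by positivity)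
      exact_mod_cast hk
    have : (x.natAbs : ℤ) ≤ (m:ℤ) := by exact_mod_cast Nat.le_add_right _ _
    linarith
  have h2 : (0:ℤ) ≤ j * m - y := by
    have h2a : y ≤ (y.natAbs : ℤ) := by omega
    have h2b : (m:ℤ) * 1 ≤ (m:ℤ) * j := by
      apply mul_le_mul_of_nonneg_left _ (by positivity)
      exact_mod_cast hj
    have : (y.natAbs : ℤ) ≤ (m:ℤ) := by exact_mod_cast Nat.le_add_left _ _
    linarith
  refine ⟨(x + m * k).toNat, (j * m - y).toNat, ?_⟩
  have key : ((x + m * k).toNat : ℤ) * j = Nat.gcd j k + ((j * m - y).toNat : ℤ) * k := by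
    rw [Int.toNat_of_nonneg h1, Int.toNat_of_nonneg h2, hg]; ring
  exact_mod_cast key

end Periodic

lemma dvd_of_root {r : ℂ} {k : ℕ} (hk0 : 0 < k) (hr : r ∈ hyp k) :
    ∀ j, (pC j).eval r = 0 → k ∣ j := by
  intro j hj
  rcases Nat.eq_zero_or_pos j with rfl | hj0
  · exact dvd_zero k
  by_contra hnd
  obtain ⟨u, v, huv⟩ := bezout_nat j k hj0 hk0
  have hd0 : (pC (Nat.gcd j k)).eval r = 0 := by
    have h1 : (pC (Nat.gcd j k + v * k)).eval r = (pC (Nat.gcd j k)).eval r :=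
      eval_add_mul_period hr.1 v _
    rw [← h1, ← huv]
    exact eval_mul_period hj u
  exact hr.2 (Nat.gcd j k) (Nat.gcd_dvd_right j k)
    (fun h => hnd (h ▸ Nat.gcd_dvd_left j k)) hd0

lemma evalD_add_period {r : ℂ} {k : ℕ} (hak : (pC k).eval r = 0) :
    ∀ j, 1 ≤ j → ((pC (j + k)).derivative).eval r = ((pC j).derivative).eval r := by
  intro j hj
  induction j with
  | zero => omega
  | succ m ih =>
    rcases Nat.eq_zero_or_pos m with rfl | hm
    · rw [show 0 + 1 + k = k + 1 from by omega, evalD_succ, evalD_succ, hak]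
      simp [pC_zero]
    · rw [show m + 1 + k = (m + k) + 1 from by omega, evalD_succ, evalD_succ,
        eval_add_period hak, ih hm]

lemma evalD_mul_period {r : ℂ} {k : ℕ} (hk0 : 0 < k) (hak : (pC k).eval r = 0) :
    ∀ m, 1 ≤ m → ((pC (m * k)).derivative).eval r = ((pC k).derivative).eval r := by
  intro m hm
  induction m with
  | zero => omega
  | succ s ih =>
    rcases Nat.eq_zero_or_pos s with rfl | hs
    · simp
    · rw [show (s+1) * k = s * k + k from by ring,
        evalD_add_period hak _ (Nat.mul_pos hs hk0), ih hs]

lemma gleason {r : ℂ} {k : ℕ} (hk0 : 0 < k) (hak : (pC k).eval r = 0) :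
    ((pC k).derivative).eval r ≠ 0 := by
  cases k with
  | zero => omega
  | succ k' =>
  have hint : IsIntegral ℤ r := by
    refine ⟨P (k'+1), (P_monic_deg k').1, ?_⟩
    rw [algebraMap_int_eq, eval₂_eq_eval_map]
    exact hak
  set c := aeval r (P k' * derivative (P k')) with hcdef
  have hc : (pC k').eval r * ((pC k').derivative).eval r = c := by
    rw [hcdef, map_mul]
    congr 1
    · rw [aeval_def, algebraMap_int_eq, eval₂_eq_eval_map]; rfl
    · rw [aeval_def, algebraMap_int_eq, eval₂_eq_eval_map, ← derivative_map]; rfl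
  have hcint : IsIntegral ℤ c := by
    have hmem : c ∈ Algebra.adjoin ℤ {r} := aeval_mem_adjoin_singleton ℤ r
    exact (mem_integralClosure_iff ℤ ℂ).mp (adjoin_le_integralClosure hint hmem)
  intro h0
  rw [evalD_succ] at h0
  have h1 : (1 : ℂ) + 2 * c = 0 := by rw [← hc]; linear_combination h0
  have h2 : c = algebraMap ℚ ℂ (-(1/2)) := by
    rw [eq_ratCast (algebraMap ℚ ℂ : ℚ →+* ℂ) (-(1/2))]
    push_cast
    linear_combination h1/2
  rw [h2] at hcint
  have h3 : IsIntegral ℤ (-(1/2) : ℚ) :=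
    (isIntegral_algebraMap_iff ((algebraMap ℚ ℂ).injective)).mp hcint
  obtain ⟨z, hz⟩ := IsIntegrallyClosed.isIntegral_iff.mp h3
  have h4 : ((2 * z : ℤ) : ℚ) = -1 := by
    push_cast
    rw [show ((z:ℚ)) = -(1/2) from hz]
    ring
  have h5 : (2 * z : ℤ) = -1 := by exact_mod_cast h4
  omega

lemma multOne {p : Polynomial ℂ} {r : ℂ} (h0 : p.eval r = 0) (h1 : p.derivative.eval r ≠ 0) :
    p.rootMultiplicity r = 1 := by
  have hp : p ≠ 0 := fun h => h1 (by simp [h])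
  have h2 : ¬ 1 < p.rootMultiplicity r := fun hl =>
    h1 ((one_lt_rootMultiplicity_iff_isRoot hp).mp hl).2
  have h3 : 0 < p.rootMultiplicity r := (rootMultiplicity_pos hp).mpr h0
  omega

lemma eta_succ (l k : ℕ) : eta (l+1) k = eta l k + if k ∣ l then 1 else 0 := by
  rcases l with _ | m
  · simp [_root_.eta]
  · have e1 : eta (m+1+1) k = (m+1)/k + 2 := by simp [_root_.eta]
    have e2 : eta (m+1) k = m/k + 2 := by simp [_root_.eta]
    rw [e1, e2, Nat.succ_div]
    split_ifs <;> omega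


/-- Every hyperbolic point of order `k`, for `k` a divisor of `n`, is a root of `q l n`
of multiplicity exactly `⌊(l-1)/k⌋ + 2` (with the conventions `1` for `l = 0` and
`2` for `l = 1`). -/
theorem hyp_rootMultiplicity (l n : ℕ) (hn : 1 ≤ n) (k : ℕ) (hk : k ∣ n)
    (r : ℂ) (hr : r ∈ hyp k) :
    (qC l n).rootMultiplicity r = eta l k := by
  have hk0 : 0 < k := by
    rcases Nat.eq_zero_or_pos k with rfl | h
    · obtain rfl : n = 0 := Nat.eq_zero_of_zero_dvd hk
      omega
    · exact h
  have hak : (pC k).eval r = 0 := hr.1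
  obtain ⟨s, rfl⟩ := hk
  have hs : 1 ≤ s := by
    rcases Nat.eq_zero_or_pos s with rfl | h
    · simp at hn
    · exact h
  have haj : ∀ j, (pC (j + k * s)).eval r = (pC j).eval r := by
    intro j; have := eval_add_mul_period hak s j; rwa [mul_comm s k] at this
  have han : (pC (k * s)).eval r = 0 := by
    have := eval_mul_period hak s; rwa [mul_comm s k] at this
  have hbk := gleason hk0 hak
  have hbn : ((pC (k * s)).derivative).eval r = ((pC k).derivative).eval r := by
    rw [mul_comm k s]; exact evalD_mul_period hk0 hak s hs
  induction l with
  | zero =>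
    rw [qC_zero_left]
    have h1 : (pC (k * s)).rootMultiplicity r = 1 :=
      multOne han (by rw [hbn]; exact hbk)
    simpa [_root_.eta] using h1
  | succ l ih =>
    rw [qC_succ_left]
    have hne : qC l (k * s) * (pC (l + k * s) + pC l) ≠ 0 := by
      rw [← qC_succ_left]; exact qC_ne_zero _ _ hn
    rw [rootMultiplicity_mul hne, ih, eta_succ]
    congr 1
    by_cases hdl : k ∣ l
    · rw [if_pos hdl]
      obtain ⟨t, rfl⟩ := hdl
      apply multOne
      · have hal : (pC (k * t)).eval r = 0 := by
          have := eval_mul_period hak t; rwa [mul_comm t k] at this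
        rw [eval_add, haj, hal]; ring
      · rw [derivative_add, eval_add]
        rcases Nat.eq_zero_or_pos t with rfl | ht
        · simp only [Nat.mul_zero, Nat.zero_add, pC_zero, derivative_zero, eval_zero, add_zero]
          rw [hbn]; exact hbk
        · have hb1 : ((pC (k * t + k * s)).derivative).eval r = ((pC k).derivative).eval r := by
            rw [show k * t + k * s = (t + s) * k from by ring]
            exact evalD_mul_period hk0 hak (t + s) (by omega)
          have hb2 : ((pC (k * t)).derivative).eval r = ((pC k).derivative).eval r := by
            rw [mul_comm k t]; exact evalD_mul_period hk0 hak t ht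
          rw [hb1, hb2, ← two_mul]
          intro hcontra
          exact hbk ((mul_eq_zero.mp hcontra).resolve_left two_ne_zero)
    · rw [if_neg hdl]
      apply rootMultiplicity_eq_zero
      intro hroot
      have h2 : (pC (l + k * s)).eval r + (pC l).eval r = 0 := by
        simpa [IsRoot, eval_add] using hroot
      rw [haj, ← two_mul] at h2
      have hal : (pC l).eval r = 0 := (mul_eq_zero.mp h2).resolve_left two_ne_zero
      exact hdl (dvd_of_root hk0 hr l hal)
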